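/- arXiv:q-alg/9708031 — 4 statements merged into one kernel-verified Lean document; each statement's English description precedes it below -/
import Mathlib

section
/- Let q be a primitive cube root of unity in ℂ. Define the 3×3 matrices J (cyclic permutation matrix with J e_0 = e_1, J e_1 = e_2, J e_2 = e_0), Q = diag(1, q^{-1}, q^{-2}), and N (nilpotent shift with N e_0 = e_1, N e_1 = e_2, N e_2 = 0). Then the 27 matrices J^p Q^{r+s} ⊗ N^r ⊗ N^s in M_3(ℂ) ⊗ M_3(ℂ) ⊗ M_3(ℂ), for p, r, s ∈ {0,1,2}, are linearly independent over ℂ. -/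
/-!
Evaluate every matrix on `e₀ ⊗ e₀ ⊗ e₀`. Since `Q` fixes `e₀` while `J` and `N` both shift
`e₀ ↦ e₁ ↦ e₂`, the matrix indexed by `(p, r, s)` sends it to `e_p ⊗ e_r ⊗ e_s`. These are 27
distinct standard basis vectors, so already the first columns of the matrices are independent.
-/

open Matrix Kronecker

noncomputable section

/-- The cyclic permutation matrix `J` with `J e₀ = e₁`, `J e₁ = e₂`, `J e₂ = e₀`. -/
def Jmat : Matrix (Fin 3) (Fin 3) ℂ := !![0,0,1; 1,0,0; 0,1,0]

/-- The diagonal matrix `Q = diag(1, q⁻¹, q⁻²)`. -/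
def Qmat (q : ℂ) : Matrix (Fin 3) (Fin 3) ℂ := !![1,0,0; 0,q⁻¹,0; 0,0,q⁻¹^2]

/-- The nilpotent shift matrix `N` with `N e₀ = e₁`, `N e₁ = e₂`, `N e₂ = 0`. -/
def Nmat : Matrix (Fin 3) (Fin 3) ℂ := !![0,0,0; 1,0,0; 0,1,0]

theorem Matrix.linearIndependent_of_mulVec_single_eq_single {ι m n R : Type*} [Fintype m]
    [Fintype n] [DecidableEq m] [DecidableEq n] [CommSemiring R] {f : ι → Matrix m n R}
    {e : ι → m} (he : Function.Injective e) (j : n)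
    (hf : ∀ i, f i *ᵥ Pi.single j 1 = Pi.single (e i) 1) :
    LinearIndependent R f := by
  apply LinearIndependent.of_comp ((mulVecBilin R R).flip (Pi.single j 1))
  have hcomp : (mulVecBilin R R).flip (Pi.single j 1) ∘ f = Pi.basisFun R m ∘ e := by
    ext1 i
    simp [mulVecBilin_apply, hf]
  rw [hcomp]
  exact (Pi.basisFun R m).linearIndependent.comp e he

theorem Matrix.kronecker_mulVec_single_eq_single {l m n p R : Type*} [Fintype m] [Fintype n]
    [DecidableEq l] [DecidableEq m] [DecidableEq n] [DecidableEq p] [Semiring R]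
    {A : Matrix l m R} {B : Matrix p n R} {j : m} {k : n} {a : l} {b : p}
    (hA : A *ᵥ Pi.single j 1 = Pi.single a 1) (hB : B *ᵥ Pi.single k 1 = Pi.single b 1) :
    (A ⊗ₖ B) *ᵥ Pi.single (j, k) 1 = Pi.single (a, b) 1 := by
  ext ⟨x, y⟩
  have hAx := congrFun hA x
  have hBy := congrFun hB y
  simp only [mulVec_single_one, col_apply, kroneckerMap_apply] at hAx hBy ⊢
  rw [hAx, hBy]
  simp only [Pi.single_apply, Prod.mk.injEq, ite_and, mul_ite, mul_one, mul_zero]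
  split_ifs <;> rfl

theorem Matrix.pow_mulVec_single_zero_of_shift {n : ℕ} {R : Type*} [Semiring R]
    {M : Matrix (Fin (n + 1)) (Fin (n + 1)) R}
    (hM : ∀ i : Fin n, M *ᵥ Pi.single i.castSucc 1 = Pi.single i.succ 1) (r : Fin (n + 1)) :
    M ^ (r : ℕ) *ᵥ Pi.single 0 1 = Pi.single r 1 := by
  induction r using Fin.induction with
  | zero => rw [Fin.val_zero, pow_zero, one_mulVec]
  | succ i ih => rw [Fin.val_succ, pow_succ', ← mulVec_mulVec, ← Fin.val_castSucc, ih, hM]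

theorem Jmat_mulVec_single_castSucc (i : Fin 2) :
    Jmat *ᵥ Pi.single i.castSucc 1 = Pi.single i.succ 1 := by
  ext k
  fin_cases i <;> fin_cases k <;> simp [Jmat]

theorem Nmat_mulVec_single_castSucc (i : Fin 2) :
    Nmat *ᵥ Pi.single i.castSucc 1 = Pi.single i.succ 1 := by
  ext k
  fin_cases i <;> fin_cases k <;> simp [Nmat]

theorem Qmat_pow_mulVec_single_zero (q : ℂ) (k : ℕ) :
    Qmat q ^ k *ᵥ Pi.single 0 1 = Pi.single 0 1 := by
  have hQ : Qmat q *ᵥ Pi.single 0 1 = Pi.single 0 1 := by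
    ext i
    fin_cases i <;> simp [Qmat]
  induction k with
  | zero => rw [pow_zero, one_mulVec]
  | succ k ih => rw [pow_succ', ← mulVec_mulVec, ih, hQ]

theorem linearIndependent_J_Q_N_general (q : ℂ) :
    LinearIndependent ℂ (fun prs : Fin 3 × Fin 3 × Fin 3 =>
      (Jmat ^ (prs.1 : ℕ) * Qmat q ^ ((prs.2.1 : ℕ) + (prs.2.2 : ℕ))) ⊗ₖ
        (Nmat ^ (prs.2.1 : ℕ)) ⊗ₖ (Nmat ^ (prs.2.2 : ℕ))) := by
  refine linearIndependent_of_mulVec_single_eq_single (Equiv.prodAssoc _ _ _).symm.injective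
    ((0, 0), 0) fun ⟨p, r, s⟩ => ?_
  have hJQ : (Jmat ^ (p : ℕ) * Qmat q ^ ((r : ℕ) + s)) *ᵥ Pi.single 0 1 = Pi.single p 1 := by
    rw [← mulVec_mulVec, Qmat_pow_mulVec_single_zero,
      pow_mulVec_single_zero_of_shift Jmat_mulVec_single_castSucc]
  have hN := pow_mulVec_single_zero_of_shift Nmat_mulVec_single_castSucc
  exact kronecker_mulVec_single_eq_single (kronecker_mulVec_single_eq_single hJQ (hN r)) (hN s)

/-- The 27 matrices `J^p Q^(r+s) ⊗ N^r ⊗ N^s`, `p, r, s ∈ {0,1,2}`, are linearly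
independent over `ℂ`. -/
theorem linearIndependent_J_Q_N (q : ℂ) (hq : IsPrimitiveRoot q 3) :
    LinearIndependent ℂ (fun prs : Fin 3 × Fin 3 × Fin 3 =>
      (Jmat ^ (prs.1 : ℕ) * Qmat q ^ ((prs.2.1 : ℕ) + (prs.2.2 : ℕ))) ⊗ₖ
        (Nmat ^ (prs.2.1 : ℕ)) ⊗ₖ (Nmat ^ (prs.2.2 : ℕ))) :=
  linearIndependent_J_Q_N_general q

end
end

section
/- Let P be a Hopf algebra, I a Hopf ideal, δ = (id ⊗ π) ∘ Δ the induced right (P/I)-coaction, and B = P^{co(P/I)}. If P is a (P/I)-Galois extension of B (i.e. the canonical map P ⊗_B P → P ⊗ P/I is bijective), then I = B⁺P, where B⁺ = B ∩ Ker ε. -/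
open TensorProduct

noncomputable section

variable (k : Type*) [Field k] (P : Type*) [Ring P] [HopfAlgebra k P]
  (H : Type*) [Ring H] [HopfAlgebra k H]

/-- The lift `T_R : P ⊗ P → P ⊗ H`, `p ⊗ p' ↦ p p'₁ ⊗ π(p'₂)`, of the canonical Galois map
`can : P ⊗_B P → P ⊗ H`. -/
def TR (π : P →ₐ[k] H) : P ⊗[k] P →ₗ[k] P ⊗[k] H :=
  (TensorProduct.map (LinearMap.mul' k P) π.toLinearMap) ∘ₗ
    ((TensorProduct.assoc k P P P).symm.toLinearMap) ∘ₗ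
      (TensorProduct.map LinearMap.id (Coalgebra.comul (R := k)))

/-- The kernel of the canonical surjection `P ⊗ P → P ⊗_B P`: the span of the elements
`p b ⊗ p' - p ⊗ b p'` with `b ∈ B`. -/
def relSpan (δ : P →ₗ[k] P ⊗[k] H) : Submodule k (P ⊗[k] P) :=
  Submodule.span k {x : P ⊗[k] P | ∃ p p' b : P,
    δ b = b ⊗ₜ[k] (1 : H) ∧ x = (p * b) ⊗ₜ[k] p' - p ⊗ₜ[k] (b * p')}

/-!
For `x ∈ P` put `u(x) = S(x₁) ⊗ x₂ ∈ P ⊗ P`. Then `T_R(u(x)) = 1 ⊗ π(x)`, so for `x ∈ ker π` the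
element `u(x)` lies in `ker T_R`, which by the Galois condition is spanned by the relations
`p b ⊗ p' - p ⊗ b p'` with `b ∈ B`. Applying `ε ⊗ id` sends `u(x)` to `x` and each relation to
`-ε(p) (b - ε(b)) p' ∈ B⁺P`, hence `x ∈ B⁺P`. Conversely, applying `ε ⊗ id` to `δ(b) = b ⊗ 1`
gives `π(b) = ε(b) 1`, which vanishes on `B⁺`.
-/

open Coalgebra HopfAlgebra LinearMap

theorem lid_rTensor_counit_rTensor_antipode_comul {R A : Type*} [CommSemiring R] [Semiring A]
    [HopfAlgebra R A] (x : A) :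
    TensorProduct.lid R A ((counit (R := R)).rTensor A ((antipode R).rTensor A (comul x))) = x := by
  rw [← comp_apply (rTensor A counit), ← rTensor_comp, counit_comp_antipode,
    rTensor_counit_comul, TensorProduct.lid_tmul, one_smul]

theorem eq_counit_smul_of_lTensor_comul_eq_tmul {R C M : Type*} [CommSemiring R] [AddCommMonoid C]
    [Module R C] [Coalgebra R C] [AddCommMonoid M] [Module R M]
    (f : C →ₗ[R] M) {c : C} {m : M} (hc : f.lTensor C (comul c) = c ⊗ₜ[R] m) :
    f c = counit (R := R) c • m := by
  have := congrArg (fun y => TensorProduct.lid R M (counit.rTensor M y)) hc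
  simp only [rTensor_tmul, TensorProduct.lid_tmul] at this
  rw [← this, ← comp_apply (rTensor M counit), rTensor_comp_lTensor, ← lTensor_comp_rTensor,
    comp_apply, rTensor_counit_comul, lTensor_tmul, TensorProduct.lid_tmul, one_smul]

section

variable {k P H}

def BplusP (δ : P →ₗ[k] P ⊗[k] H) : Submodule k P :=
  Submodule.span k {x : P | ∃ b p : P, δ b = b ⊗ₜ[k] (1 : H) ∧ counit (R := k) b = 0 ∧ x = b * p}

theorem TR_rTensor_antipode_comul (π : P →ₐ[k] H) (x : P) :
    TR k P H π ((antipode k).rTensor P (comul x)) = 1 ⊗ₜ[k] π x := by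
  have hS : (TensorProduct.assoc k P P P).symm
      ((comul (R := k)).lTensor P ((antipode k).rTensor P (comul x))) =
      ((antipode k).rTensor P).rTensor P (comul.rTensor P (comul x)) := by
    rw [← comp_apply (lTensor P comul), lTensor_comp_rTensor, ← rTensor_comp_lTensor, comp_apply,
      rTensor_tensor, comp_apply, comp_apply, LinearEquiv.coe_coe, LinearEquiv.coe_coe,
      LinearEquiv.symm_apply_apply, coassoc_symm_apply]
  calc TR k P H π ((antipode k).rTensor P (comul x))
      = TensorProduct.map (mul' k P) π.toLinearMap
          (((antipode k).rTensor P).rTensor P (comul.rTensor P (comul x))) :=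
        congrArg (TensorProduct.map (mul' k P) π.toLinearMap) hS
    _ = TensorProduct.map (mul' k P ∘ₗ (antipode k).rTensor P ∘ₗ comul) π.toLinearMap
          (comul x) := by
        rw [LinearMap.map_rTensor, LinearMap.map_rTensor]
        rfl
    _ = 1 ⊗ₜ[k] π x := by
        rw [mul_antipode_rTensor_comul, ← LinearMap.map_rTensor, rTensor_counit_comul]
        simp

theorem BplusP_le_ker {π : P →ₐ[k] H} {δ : P →ₗ[k] P ⊗[k] H}
    (hδ : δ = TensorProduct.map LinearMap.id π.toLinearMap ∘ₗ comul) :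
    BplusP δ ≤ LinearMap.ker π.toLinearMap := by
  rw [BplusP, Submodule.span_le]
  rintro _ ⟨b, p, hb, hεb, rfl⟩
  have hπb : π b = 0 := by
    rw [hδ] at hb
    simpa [hεb] using eq_counit_smul_of_lTensor_comul_eq_tmul π.toLinearMap hb
  simp [hπb]

theorem sub_counit_smul_one_mul_mem_BplusP {δ : P →ₗ[k] P ⊗[k] H} (hδ1 : δ 1 = 1 ⊗ₜ[k] 1)
    {b : P} (hb : δ b = b ⊗ₜ[k] 1) (p : P) :
    (b - counit (R := k) b • 1) * p ∈ BplusP δ := by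
  refine Submodule.subset_span ⟨_, p, ?_, ?_, rfl⟩
  · rw [map_sub, map_smul, hb, hδ1, sub_tmul, smul_tmul']
  · rw [map_sub, map_smul, Bialgebra.counit_one, smul_eq_mul, mul_one, sub_self]

theorem relSpan_le_comap_BplusP {δ : P →ₗ[k] P ⊗[k] H} (hδ1 : δ 1 = 1 ⊗ₜ[k] 1) :
    relSpan k P H δ ≤ (BplusP δ).comap (TensorProduct.lid k P ∘ₗ (counit (R := k)).rTensor P) := by
  rw [relSpan, Submodule.span_le]
  rintro _ ⟨p, p', b, hb, rfl⟩
  have hgen : counit (R := k) (p * b) • p' - counit (R := k) p • (b * p') =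
      -(counit (R := k) p • ((b - counit (R := k) b • 1) * p')) := by
    rw [Bialgebra.counit_mul, sub_mul, smul_mul_assoc, one_mul, smul_sub, smul_smul, neg_sub]
  simp only [SetLike.mem_coe, Submodule.mem_comap, map_sub, comp_apply, rTensor_tmul,
    LinearEquiv.coe_coe, TensorProduct.lid_tmul, hgen]
  exact neg_mem (Submodule.smul_mem _ _ (sub_counit_smul_one_mul_mem_BplusP hδ1 hb p'))

end

theorem I_eq_BplusP_of_galois
    (π : P →ₐ[k] H)
    (δ : P →ₗ[k] P ⊗[k] H)
    (hδ : δ = (TensorProduct.map LinearMap.id π.toLinearMap) ∘ₗ Coalgebra.comul)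
    -- the Galois condition: `can : P ⊗_B P → P ⊗ (P/I)` is bijective
    (hker : LinearMap.ker (TR k P H π) = relSpan k P H δ) :
    -- conclusion: `I = B⁺P`
    LinearMap.ker π.toLinearMap = Submodule.span k
      {x : P | ∃ b p : P, δ b = b ⊗ₜ[k] (1 : H) ∧
        Coalgebra.counit (R := k) (A := P) b = 0 ∧ x = b * p} := by
  show _ = BplusP δ
  refine le_antisymm (fun x (hx : π x = 0) => ?_) (BplusP_le_ker hδ)
  have hδ1 : δ 1 = 1 ⊗ₜ[k] 1 := by simp [hδ, Algebra.TensorProduct.one_def]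
  have hu : (antipode k).rTensor P (comul x) ∈ relSpan k P H δ := by
    rw [← hker, LinearMap.mem_ker, TR_rTensor_antipode_comul, hx, tmul_zero]
  simpa only [Submodule.mem_comap, comp_apply, LinearEquiv.coe_coe,
    lid_rTensor_counit_rTensor_antipode_comul] using relSpan_le_comap_BplusP hδ1 hu

end
end

section
/- Let P be a Hopf algebra, I a Hopf ideal with I = B⁺P where B = P^{co(P/I)}, and suppose Ψ : P → B is a left B-linear convolution-invertible map. Then for all b ∈ B and p ∈ P, Ψ⁻¹(b₁ p) b₂ = ε(b) Ψ⁻¹(p). -/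
/-!
Since `P` is flat over `k`, a coinvariant `b` has `Δ b = ∑ xᵢ ⊗ cᵢ` with all `cᵢ ∈ B`. For `c ∈ B`,
`Ψ ∗ Ψ⁻¹ = ε` and left `B`-linearity of `Ψ` give `Ψ⁻¹(x p) c = ∑ Ψ⁻¹(x p₁) Ψ(c p₂) Ψ⁻¹(p₃)`.
Summing over `i` and using `Δ (b p) = Δ b Δ p`, the left-hand side becomes
`∑ (Ψ⁻¹ ∗ Ψ)(b p₁) Ψ⁻¹(p₂) = ε(b) Ψ⁻¹(p)`.
-/

open TensorProduct Coalgebra WithConv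

namespace Comodule

variable {k M H : Type*} [CommRing k] [AddCommGroup M] [Module k M] [AddCommGroup H] [Module k H]

theorem lTensor_comp_comul_comp_comul [Coalgebra k M] (π : M →ₗ[k] H) :
    (π.lTensor M ∘ₗ comul).lTensor M ∘ₗ comul =
      (TensorProduct.assoc k M M H).toLinearMap ∘ₗ comul.rTensor H ∘ₗ π.lTensor M ∘ₗ comul := by
  simp only [coassoc_simps]

variable [One H]

def coinvariants (δ : M →ₗ[k] M ⊗[k] H) : Submodule k M :=
  LinearMap.ker (δ - (TensorProduct.mk k M H).flip 1)

theorem mem_coinvariants {δ : M →ₗ[k] M ⊗[k] H} {m : M} :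
    m ∈ coinvariants δ ↔ δ m = m ⊗ₜ 1 := by
  simp [coinvariants, sub_eq_zero]

theorem lTensor_flip_mk_one (N : Type*) [AddCommGroup N] [Module k N] :
    ((TensorProduct.mk k M H).flip 1).lTensor N =
      (TensorProduct.assoc k N M H).toLinearMap ∘ₗ (TensorProduct.mk k (N ⊗[k] M) H).flip 1 :=
  TensorProduct.ext' fun _ _ ↦ rfl

variable [Coalgebra k M]

theorem comul_mem_range_lTensor_coinvariants [Module.Flat k M] (π : M →ₗ[k] H) {b : M}
    (hb : b ∈ coinvariants (π.lTensor M ∘ₗ comul)) :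
    comul b ∈ LinearMap.range ((coinvariants (π.lTensor M ∘ₗ comul)).subtype.lTensor M) := by
  have hδb := mem_coinvariants.1 hb
  refine (Module.Flat.lTensor_exact M (LinearMap.exact_subtype_ker_map _) (comul b)).1 ?_
  have hcoassoc := LinearMap.congr_fun (lTensor_comp_comul_comp_comul π) b
  simp only [LinearMap.comp_apply] at hcoassoc hδb
  rw [LinearMap.lTensor_sub, LinearMap.sub_apply, hcoassoc, hδb, lTensor_flip_mk_one]
  simp

end Comodule

namespace LinearMap

variable {R A C : Type*} [CommSemiring R] [Semiring A] [Algebra R A] [AddCommMonoid C] [Module R C]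
  [Coalgebra R C]

theorem toConv_mul_toConv_eq_one_iff {f g : C →ₗ[R] A} :
    toConv f * toConv g = 1 ↔ ∀ c, mul' R A (map f g (comul c)) = counit (R := R) c • 1 := by
  simp [WithConv.ext_iff, LinearMap.ext_iff, Algebra.algebraMap_eq_smul_one]

end LinearMap

namespace Bialgebra

variable {k P : Type*} [CommSemiring k] [Semiring P] [Bialgebra k P]

/-- `twistedConvMul f g (∑ t' ⊗ t'') q = ∑ f (t' q₁) * g (t'' q₂)`. -/
def twistedConvMul (f g : P →ₗ[k] P) (t : P ⊗[k] P) : P →ₗ[k] P :=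
  LinearMap.mul' k P ∘ₗ map f g ∘ₗ LinearMap.mulLeft k t ∘ₗ comul

theorem twistedConvMul_add (f g : P →ₗ[k] P) (t t' : P ⊗[k] P) :
    twistedConvMul f g (t + t') = twistedConvMul f g t + twistedConvMul f g t' := by
  ext; simp [twistedConvMul, add_mul]

theorem twistedConvMul_comul (f g : P →ₗ[k] P) (b : P) :
    twistedConvMul f g (comul b) = (toConv f * toConv g).ofConv ∘ₗ LinearMap.mulLeft k b := by
  ext; simp [twistedConvMul, Bialgebra.comul_mul]

theorem toConv_twistedConvMul_tmul (f g : P →ₗ[k] P) (x c : P) (hc : ∀ q, g (c * q) = c * g q) :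
    toConv (twistedConvMul f g (x ⊗ₜ c)) =
      toConv (LinearMap.mulRight k c ∘ₗ f ∘ₗ LinearMap.mulLeft k x) * toConv g := by
  have h : LinearMap.mul' k P ∘ₗ map f g ∘ₗ LinearMap.mulLeft k (x ⊗ₜ c) =
      LinearMap.mul' k P ∘ₗ map (LinearMap.mulRight k c ∘ₗ f ∘ₗ LinearMap.mulLeft k x) g :=
    TensorProduct.ext' fun y z ↦ by simp [hc, mul_assoc]
  ext q
  exact LinearMap.congr_fun h (comul q)

theorem toConv_one_comp_mulLeft (b : P) :
    toConv ((1 : WithConv (P →ₗ[k] P)).ofConv ∘ₗ LinearMap.mulLeft k b) = counit (R := k) b • 1 := by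
  ext; simp [Algebra.algebraMap_eq_smul_one, smul_smul]

theorem mul'_map_lTensor_subtype_mul_tmul_one {Ψ Ψinv : P →ₗ[k] P}
    (hΨ : toConv Ψ * toConv Ψinv = 1) (S : Submodule k P) (hS : ∀ c ∈ S, ∀ q, Ψ (c * q) = c * Ψ q)
    (s : P ⊗[k] S) (p : P) :
    LinearMap.mul' k P (map Ψinv LinearMap.id (S.subtype.lTensor P s * (p ⊗ₜ 1))) =
      (toConv (twistedConvMul Ψinv Ψ (S.subtype.lTensor P s)) * toConv Ψinv) p := by
  induction s using TensorProduct.induction_on with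
  | zero => simp [twistedConvMul]
  | add s s' hs hs' => simp [add_mul, hs, hs', twistedConvMul_add]
  | tmul x c =>
    rw [LinearMap.lTensor_tmul, Submodule.subtype_apply,
      toConv_twistedConvMul_tmul _ _ _ _ (hS c c.2), mul_assoc, hΨ, mul_one]
    simp

end Bialgebra

open Comodule Bialgebra in
theorem convolution_inverse_property_general
    (k : Type*) [Field k] (P : Type*) [Ring P] [HopfAlgebra k P]
    (H : Type*) [Ring H] [HopfAlgebra k H]
    (π : P →ₐ[k] H)
    -- the right `H`-coaction `δ = (id ⊗ π) ∘ Δ` on `P`: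
    (δ : P →ₗ[k] P ⊗[k] H)
    (hδ : δ = (TensorProduct.map LinearMap.id π.toLinearMap) ∘ₗ Coalgebra.comul)
    -- `Ψ : P → B` is left `B`-linear:
    (Ψ : P →ₗ[k] P)
    (hΨlin : ∀ b p : P, δ b = b ⊗ₜ[k] (1 : H) → Ψ (b * p) = b * Ψ p)
    -- `Ψ` is convolution invertible with inverse `Ψinv` (also valued in `B`):
    (Ψinv : P →ₗ[k] P)
    (hconv₁ : ∀ p : P, (LinearMap.mul' k P) ((TensorProduct.map Ψ Ψinv)
        (Coalgebra.comul (R := k) p)) = (Coalgebra.counit (R := k) (A := P) p) • (1 : P))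
    (hconv₂ : ∀ p : P, (LinearMap.mul' k P) ((TensorProduct.map Ψinv Ψ)
        (Coalgebra.comul (R := k) p)) = (Coalgebra.counit (R := k) (A := P) p) • (1 : P)) :
    -- conclusion: `Ψ⁻¹(b₁ p) b₂ = ε(b) Ψ⁻¹(p)` for all `b ∈ B`, `p ∈ P`
    ∀ b p : P, δ b = b ⊗ₜ[k] (1 : H) →
      (LinearMap.mul' k P) ((TensorProduct.map Ψinv LinearMap.id)
          ((Coalgebra.comul (R := k) b) * (p ⊗ₜ[k] (1 : P)))) =
        (Coalgebra.counit (R := k) (A := P) b) • Ψinv p := by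
  intro b p hb
  subst hδ
  obtain ⟨s, hs⟩ := comul_mem_range_lTensor_coinvariants π.toLinearMap (mem_coinvariants.2 hb)
  have hΨS : ∀ c ∈ coinvariants (π.toLinearMap.lTensor P ∘ₗ comul), ∀ q, Ψ (c * q) = c * Ψ q :=
    fun c hc q ↦ hΨlin c q (mem_coinvariants.1 hc)
  have hΨΨinv := LinearMap.toConv_mul_toConv_eq_one_iff.2 hconv₁
  have hΨinvΨ := LinearMap.toConv_mul_toConv_eq_one_iff.2 hconv₂
  calc _ = (toConv (twistedConvMul Ψinv Ψ (comul b)) * toConv Ψinv) p := by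
        rw [← hs, mul'_map_lTensor_subtype_mul_tmul_one hΨΨinv _ hΨS]
    _ = (counit (R := k) b • 1 * toConv Ψinv) p := by
        rw [twistedConvMul_comul, hΨinvΨ, toConv_one_comp_mulLeft]
    _ = counit (R := k) b • Ψinv p := by
        rw [smul_mul_assoc, one_mul]
        rfl

/-- Let `P` be a Hopf algebra over a field `k`, `I` a Hopf ideal presented as the kernel of a
surjective Hopf algebra map `π : P → H` (so `H = P/I`), `δ = (id ⊗ π) ∘ Δ` the induced right
`H`-coaction and `B = P^{co H}` the coinvariants.  Assume `I = B⁺P`.  If `Ψ : P → B ⊆ P` is a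
left `B`-linear convolution-invertible map with convolution inverse `Ψ⁻¹`, then for all
`b ∈ B` and `p ∈ P` one has `Ψ⁻¹(b₁ p) b₂ = ε(b) Ψ⁻¹(p)`. -/
theorem convolution_inverse_property
    (k : Type*) [Field k] (P : Type*) [Ring P] [HopfAlgebra k P]
    (H : Type*) [Ring H] [HopfAlgebra k H]
    (π : P →ₐ[k] H) (hπsurj : Function.Surjective π)
    (hπcomul : ∀ p : P, Coalgebra.comul (R := k) (π p) =
      (TensorProduct.map π.toLinearMap π.toLinearMap) (Coalgebra.comul (R := k) p))
    (hπcounit : ∀ p : P,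
      Coalgebra.counit (R := k) (A := H) (π p) = Coalgebra.counit (R := k) (A := P) p)
    -- the right `H`-coaction `δ = (id ⊗ π) ∘ Δ` on `P`:
    (δ : P →ₗ[k] P ⊗[k] H)
    (hδ : δ = (TensorProduct.map LinearMap.id π.toLinearMap) ∘ₗ Coalgebra.comul)
    -- `I = B⁺P`, where `I = Ker π` and `B⁺ = B ∩ Ker ε`:
    (hI : LinearMap.ker π.toLinearMap = Submodule.span k
      {x : P | ∃ b p : P, δ b = b ⊗ₜ[k] (1 : H) ∧
        Coalgebra.counit (R := k) (A := P) b = 0 ∧ x = b * p})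
    -- `Ψ : P → B` is left `B`-linear:
    (Ψ : P →ₗ[k] P)
    (hΨB : ∀ p : P, δ (Ψ p) = Ψ p ⊗ₜ[k] (1 : H))
    (hΨlin : ∀ b p : P, δ b = b ⊗ₜ[k] (1 : H) → Ψ (b * p) = b * Ψ p)
    -- `Ψ` is convolution invertible with inverse `Ψinv` (also valued in `B`):
    (Ψinv : P →ₗ[k] P)
    (hΨinvB : ∀ p : P, δ (Ψinv p) = Ψinv p ⊗ₜ[k] (1 : H))
    (hconv₁ : ∀ p : P, (LinearMap.mul' k P) ((TensorProduct.map Ψ Ψinv)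
        (Coalgebra.comul (R := k) p)) = (Coalgebra.counit (R := k) (A := P) p) • (1 : P))
    (hconv₂ : ∀ p : P, (LinearMap.mul' k P) ((TensorProduct.map Ψinv Ψ)
        (Coalgebra.comul (R := k) p)) = (Coalgebra.counit (R := k) (A := P) p) • (1 : P)) :
    -- conclusion: `Ψ⁻¹(b₁ p) b₂ = ε(b) Ψ⁻¹(p)` for all `b ∈ B`, `p ∈ P`
    ∀ b p : P, δ b = b ⊗ₜ[k] (1 : H) →
      (LinearMap.mul' k P) ((TensorProduct.map Ψinv LinearMap.id)
          ((Coalgebra.comul (R := k) b) * (p ⊗ₜ[k] (1 : P)))) =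
        (Coalgebra.counit (R := k) (A := P) b) • Ψinv p :=
  convolution_inverse_property_general k P H π δ hδ Ψ hΨlin Ψinv hconv₁ hconv₂
end

section
/- Let q = e^{2πi/3} and H₊ the ℂ-algebra generated by ã, b̃ with relations ãb̃ = q b̃ã, ã³ = 1, b̃³ = 0. Then the 9 monomials ã^p b̃^r, p, r ∈ {0,1,2}, form a ℂ-basis of H₊; in particular dim_ℂ H₊ = 9 and b̃² ≠ 0. -/
noncomputable section

/-- `q = e^{2πi/3}`, a primitive cube root of unity. -/
def qc : ℂ := Complex.exp (2 * Real.pi * Complex.I / 3)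

/-- generators `ã, b̃` of the free algebra. -/
def gop : FreeAlgebra ℂ (Fin 2) := FreeAlgebra.ι ℂ 0
def gb : FreeAlgebra ℂ (Fin 2) := FreeAlgebra.ι ℂ 1

/-- The defining relations of `H₊`: `ãb̃ = q b̃ã`, `ã³ = 1`, `b̃³ = 0`. -/
inductive HplusRel : FreeAlgebra ℂ (Fin 2) → FreeAlgebra ℂ (Fin 2) → Prop
  | ab : HplusRel (gop * gb) (qc • (gb * gop))
  | a3 : HplusRel (gop ^ 3) 1
  | b3 : HplusRel (gb ^ 3) 0

/-- the 9-dimensional algebra `H₊`. -/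
abbrev Hplus : Type := RingQuot HplusRel

def ta : Hplus := RingQuot.mkAlgHom ℂ HplusRel gop
def tb : Hplus := RingQuot.mkAlgHom ℂ HplusRel gb

/-!
The relations move every `b̃` to the right of every `ã` at the cost of a scalar, and cut the
exponents of `ã` modulo 3 and of `b̃` below 3, so the nine monomials span `H₊`. For independence,
`H₊` acts on `ℂ³ ⊗ ℂ³` by `ã ↦ J ⊗ I₃`, `b̃ ↦ Q ⊗ N`, and `ã^p b̃^r` sends `e₀ ⊗ e₀` to the
basis vector `e₋ₚ ⊗ eᵣ`; these nine vectors are distinct.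
-/

section General

variable {R A : Type*} [CommSemiring R] [Semiring A] [Algebra R A]

theorem mul_pow_eq_smul_of_mul_eq_smul {a b : A} {c : R} (h : b * a = c • (a * b)) (n : ℕ) :
    b * a ^ n = c ^ n • (a ^ n * b) := by
  induction n with
  | zero => simp
  | succ n ih =>
    rw [pow_succ, ← mul_assoc, ih, smul_mul_assoc, mul_assoc, h, mul_smul_comm, smul_smul,
      ← mul_assoc, ← pow_succ]

theorem Submodule.span_eq_top_of_mul_mem {ι : Type*} {g : ι → A}
    (hg : Algebra.adjoin R (Set.range g) = ⊤) {t : Set A} (h1 : (1 : A) ∈ span R t)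
    (hmul : ∀ i, ∀ m ∈ t, g i * m ∈ span R t) : span R t = ⊤ := by
  set S := span R t
  have hgen (i : ι) {y : A} (hy : y ∈ S) : g i * y ∈ S := by
    induction hy using Submodule.span_induction with
    | mem m hm => exact hmul i m hm
    | zero => simp
    | add y z _ _ hy hz => rw [mul_add]; exact S.add_mem hy hz
    | smul c y _ hy => rw [mul_smul_comm]; exact S.smul_mem c hy
  have hall (x : A) : ∀ y ∈ S, x * y ∈ S := by
    have hx : x ∈ Algebra.adjoin R (Set.range g) := hg ▸ Algebra.mem_top
    induction hx using Algebra.adjoin_induction with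
    | mem x hx => obtain ⟨i, rfl⟩ := hx; exact fun y => hgen i
    | algebraMap c => intro y hy; rw [← Algebra.smul_def]; exact S.smul_mem c hy
    | add x z _ _ hx hz => intro y hy; rw [add_mul]; exact S.add_mem (hx y hy) (hz y hy)
    | mul x z _ _ hx hz => intro y hy; rw [mul_assoc]; exact hx _ (hz y hy)
  exact eq_top_iff.mpr fun x _ => mul_one x ▸ hall x 1 h1

theorem RingQuot.adjoin_range_mkAlgHom_comp_ι {X : Type*}
    (r : FreeAlgebra R X → FreeAlgebra R X → Prop) :
    Algebra.adjoin R (Set.range (mkAlgHom R r ∘ FreeAlgebra.ι R)) = ⊤ := by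
  rw [Set.range_comp, ← AlgHom.map_adjoin, FreeAlgebra.adjoin_range_ι, Algebra.map_top,
    AlgHom.range_eq_top]
  exact mkAlgHom_surjective R r

end General

theorem pow_val_add_of_pow_eq_one {M : Type*} [Monoid M] {ω : M} {n : ℕ} (h : ω ^ n = 1)
    (i j : Fin n) : ω ^ ((i + j : Fin n) : ℕ) = ω ^ (i : ℕ) * ω ^ (j : ℕ) := by
  rw [Fin.val_add, ← pow_eq_pow_mod _ h, pow_add]

theorem qc_pow_three : qc ^ 3 = 1 := by
  rw [qc, ← Complex.exp_nat_mul, ← Complex.exp_two_pi_mul_I]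
  congr 1
  ring

namespace Hplus

theorem ta_pow_three : ta ^ 3 = 1 := by
  simpa [ta] using RingQuot.mkAlgHom_rel ℂ HplusRel.a3

theorem tb_pow_three : tb ^ 3 = 0 := by
  simpa [tb] using RingQuot.mkAlgHom_rel ℂ HplusRel.b3

theorem ta_mul_tb : ta * tb = qc • (tb * ta) := by
  simpa [ta, tb] using RingQuot.mkAlgHom_rel ℂ HplusRel.ab

theorem tb_mul_ta : tb * ta = qc ^ 2 • (ta * tb) := by
  rw [ta_mul_tb, smul_smul, ← pow_succ, qc_pow_three, one_smul]

def monomial (pr : Fin 3 × Fin 3) : Hplus := ta ^ (pr.1 : ℕ) * tb ^ (pr.2 : ℕ)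

theorem pow_mul_pow_mem_span (p r : ℕ) :
    ta ^ p * tb ^ r ∈ Submodule.span ℂ (Set.range monomial) := by
  rcases lt_or_ge r 3 with hr | hr
  · rw [pow_eq_pow_mod p ta_pow_three]
    exact Submodule.subset_span ⟨(⟨p % 3, Nat.mod_lt p three_pos⟩, ⟨r, hr⟩), rfl⟩
  · rw [pow_eq_zero_of_le hr tb_pow_three, mul_zero]
    exact Submodule.zero_mem _

theorem span_monomial_eq_top : Submodule.span ℂ (Set.range monomial) = ⊤ := by
  refine Submodule.span_eq_top_of_mul_mem (RingQuot.adjoin_range_mkAlgHom_comp_ι HplusRel)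
    (by simpa using pow_mul_pow_mem_span 0 0) ?_
  rintro i _ ⟨⟨p, r⟩, rfl⟩
  fin_cases i
  · change ta * (ta ^ (p : ℕ) * tb ^ (r : ℕ)) ∈ _
    rw [← mul_assoc, ← pow_succ']
    exact pow_mul_pow_mem_span _ _
  · change tb * (ta ^ (p : ℕ) * tb ^ (r : ℕ)) ∈ _
    rw [← mul_assoc, mul_pow_eq_smul_of_mul_eq_smul tb_mul_ta, smul_mul_assoc, mul_assoc,
      ← pow_succ']
    exact Submodule.smul_mem _ _ (pow_mul_pow_mem_span _ _)

abbrev V : Type := Fin 3 × Fin 3 → ℂ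

/-- `J ⊗ I₃`. -/
def repA : Module.End ℂ V := LinearMap.funLeft ℂ ℂ fun x => (x.1 + 1, x.2)

/-- `Q ⊗ N`, with `Q = diag(1, q, q²)` and `N` the nilpotent shift `eⱼ ↦ eⱼ₊₁`. -/
def repB : Module.End ℂ V where
  toFun f x := qc ^ (x.1 : ℕ) * if x.2 = 0 then 0 else f (x.1, x.2 - 1)
  map_add' f g := by
    funext x
    by_cases h : x.2 = 0 <;> simp [h, mul_add]
  map_smul' c f := by
    funext x
    by_cases h : x.2 = 0 <;> simp [h, mul_left_comm]

theorem repA_apply (f : V) (x : Fin 3 × Fin 3) : repA f x = f (x.1 + 1, x.2) := rfl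

theorem repB_apply (f : V) (x : Fin 3 × Fin 3) :
    repB f x = qc ^ (x.1 : ℕ) * if x.2 = 0 then 0 else f (x.1, x.2 - 1) := rfl

theorem repA_pow_apply (n : ℕ) (f : V) (x : Fin 3 × Fin 3) :
    (repA ^ n) f x = f (x.1 + n • 1, x.2) := by
  induction n generalizing x with
  | zero => simp
  | succ n ih =>
    rw [pow_succ', Module.End.mul_apply, repA_apply, ih, succ_nsmul, add_comm (n • 1 : Fin 3),
      add_assoc]

theorem repA_pow_three : repA ^ 3 = 1 :=
  LinearMap.ext fun f => funext fun x => by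
    rw [repA_pow_apply, show (3 • 1 : Fin 3) = 0 by decide, add_zero]
    rfl

theorem repB_pow_three : repB ^ 3 = 0 :=
  LinearMap.ext fun f => funext fun ⟨i, j⟩ => by
    fin_cases j <;> simp [pow_succ, repB_apply]

theorem repA_mul_repB : repA * repB = qc • (repB * repA) :=
  LinearMap.ext fun f => funext fun x => by
    simp only [Module.End.mul_apply, LinearMap.smul_apply, Pi.smul_apply, repA_apply, repB_apply,
      pow_val_add_of_pow_eq_one qc_pow_three, smul_eq_mul, Fin.val_one, pow_one]
    ring

def rep : Hplus →ₐ[ℂ] Module.End ℂ V :=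
  RingQuot.liftAlgHom ℂ ⟨FreeAlgebra.lift ℂ ![repA, repB], fun x y h => by
    cases h <;> simp [gop, gb, repA_mul_repB, repA_pow_three, repB_pow_three]⟩

theorem rep_ta : rep ta = repA := by
  simp [rep, ta, gop]

theorem rep_tb : rep tb = repB := by
  simp [rep, tb, gb]

theorem repB_pow_single (r : Fin 3) :
    (repB ^ (r : ℕ)) (Pi.single (0, 0) 1) = Pi.single (0, r) 1 := by
  funext ⟨i, j⟩
  fin_cases r <;> fin_cases i <;> fin_cases j <;> simp [pow_succ, repB_apply]

theorem rep_monomial_single (pr : Fin 3 × Fin 3) :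
    rep (monomial pr) (Pi.single (0, 0) 1) = Pi.single (-pr.1, pr.2) 1 := by
  rw [monomial, map_mul, map_pow, map_pow, rep_ta, rep_tb, Module.End.mul_apply, repB_pow_single]
  have hp : (pr.1 : ℕ) • (1 : Fin 3) = pr.1 := by fin_cases pr <;> rfl
  funext x
  simp [repA_pow_apply, hp, Pi.single_apply, Prod.ext_iff, add_eq_zero_iff_eq_neg]

theorem linearIndependent_monomial : LinearIndependent ℂ monomial := by
  apply LinearIndependent.of_comp ((LinearMap.applyₗ (Pi.single (0, 0) 1)).comp rep.toLinearMap)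
  have hinj : Function.Injective fun pr : Fin 3 × Fin 3 => (-pr.1, pr.2) :=
    neg_injective.prodMap Function.injective_id
  have hsingle : (LinearMap.applyₗ (Pi.single (0, 0) 1)).comp rep.toLinearMap ∘ monomial =
      (fun x => Pi.single x 1) ∘ fun pr : Fin 3 × Fin 3 => (-pr.1, pr.2) :=
    funext rep_monomial_single
  rw [hsingle]
  exact (Pi.linearIndependent_single_one _ ℂ).comp _ hinj

end Hplus

/-- The 9 monomials `ã^p b̃^r`, `p, r ∈ {0,1,2}`, form a `ℂ`-basis of `H₊`;
in particular `dim_ℂ H₊ = 9` and `b̃² ≠ 0`. -/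
theorem Hplus_monomial_basis :
    LinearIndependent ℂ (fun pr : Fin 3 × Fin 3 => ta ^ (pr.1 : ℕ) * tb ^ (pr.2 : ℕ)) ∧
    Submodule.span ℂ
      (Set.range (fun pr : Fin 3 × Fin 3 => ta ^ (pr.1 : ℕ) * tb ^ (pr.2 : ℕ))) = ⊤ ∧
    Module.finrank ℂ Hplus = 9 ∧
    tb ^ 2 ≠ 0 := by
  have hli : LinearIndependent ℂ Hplus.monomial := Hplus.linearIndependent_monomial
  have hspan : Submodule.span ℂ (Set.range Hplus.monomial) = ⊤ := Hplus.span_monomial_eq_top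
  refine ⟨hli, hspan, ?_, ?_⟩
  · simpa using Module.finrank_eq_card_basis (Module.Basis.mk hli hspan.ge)
  · simpa [Hplus.monomial] using hli.ne_zero (0, 2)

end
end
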